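/- Let X = (X⁺,X⁻) ∈ L with X⁺ ≠ 0 and X⁻ ≠ 0, let k ∈ {1,…,d}, and let z be a natural number with 1 ≤ z < min{B_X(1), S_X(d)}. Let X' = C(X⁺ + z·e_k, X⁻) be the state obtained by clearing after the arrival of a limit buy order of size z at price k. Then X' ∈ L and: (a) if k ≤ b(X), then X' = (X⁺ + z·e_k, X⁻), b(X') = b(X) and a(X') = a(X); (b) if b(X) < k < a(X), then X' = (X⁺ + z·e_k, X⁻), b(X') = k and a(X') = a(X); (c) if a(X) ≤ k < S_X⁻¹(z), then X' = (X⁺ + (z − S_X(k))·e_k, τ^{k+1}(X⁻)), b(X') = k and a(X') = S_X⁻¹(S_X(k)+1); (d) if S_X⁻¹(z) ≤ k, then X' = (X⁺, τ^{S_X⁻¹(z)+1}(X⁻) + (S_X(S_X⁻¹(z)) − z)·e_{S_X⁻¹(z)}), b(X') = b(X) and a(X') = S_X⁻¹(z+1). -/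
import Mathlib


open scoped BigOperators

namespace OB

/-- The space of order configurations `E = ℕ^d × ℕ^d`: buy side and sell side. -/
abbrev E (d : ℕ) := (Fin d → ℕ) × (Fin d → ℕ)

/-- Price support of a vector: the set of prices `j ∈ {1,…,d}` with a positive queue. -/
def supp {d : ℕ} (Z : Fin d → ℕ) : Finset ℕ :=
  (Finset.univ.filter fun j : Fin d => 0 < Z j).image fun j : Fin d => (j : ℕ) + 1

/-- `sup supp`, with the convention `sup ∅ = 0`. -/
def supSupp {d : ℕ} (Z : Fin d → ℕ) : ℕ := (supp Z).sup id

/-- `inf supp`, with the convention `inf ∅ = d+1`. -/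
def infSupp {d : ℕ} (Z : Fin d → ℕ) : ℕ :=
  if h : (supp Z).Nonempty then (supp Z).min' h else d + 1

/-- bid price `b(X) = sup supp(X⁺)`. -/
def bid {d : ℕ} (X : E d) : ℕ := supSupp X.1

/-- ask price `a(X) = inf supp(X⁻)`. -/
def ask {d : ℕ} (X : E d) : ℕ := infSupp X.2

/-- Admissible limit order book configurations: `a(X) > b(X)`. -/
def Lset (d : ℕ) : Set (E d) := {X | bid X < ask X}

/-- Entry of a vector at price `i` (prices run from 1 to d; 0 outside this range). -/
def ent {d : ℕ} (z : Fin d → ℕ) (i : ℕ) : ℕ :=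
  if h : 1 ≤ i ∧ i ≤ d then z ⟨i - 1, by omega⟩ else 0

/-- Standard basis vector at price `i`. -/
def e {d : ℕ} (i : ℕ) : Fin d → ℕ := fun j => if (j : ℕ) + 1 = i then 1 else 0

/-- `τ_i`: zero out all entries at prices `> i`. -/
def tauLow {d : ℕ} (i : ℤ) (z : Fin d → ℕ) : Fin d → ℕ :=
  fun j => if ((j : ℕ) + 1 : ℤ) ≤ i then z j else 0

/-- `τ^i`: zero out all entries at prices `< i`. -/
def tauHigh {d : ℕ} (i : ℤ) (z : Fin d → ℕ) : Fin d → ℕ :=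
  fun j => if i ≤ ((j : ℕ) + 1 : ℤ) then z j else 0

/-- `B_X(k) = Σ_{i ≥ k} X⁺_i`. -/
def BX {d : ℕ} (X : E d) (k : ℕ) : ℕ := ∑ j : Fin d, if k ≤ (j : ℕ) + 1 then X.1 j else 0

/-- `S_X(k) = Σ_{i ≤ k} X⁻_i`. -/
def SX {d : ℕ} (X : E d) (k : ℕ) : ℕ := ∑ j : Fin d, if (j : ℕ) + 1 ≤ k then X.2 j else 0

/-- `g_X(k) = S_X(k) − B_X(k)`. -/
def gX {d : ℕ} (X : E d) (k : ℕ) : ℤ := (SX X k : ℤ) - (BX X k : ℤ)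

/-- `p_A(X) = inf{k ∈ {1,…,d} : g_X(k) > 0}`, convention `inf ∅ = d+1`. -/
def pA {d : ℕ} (X : E d) : ℕ :=
  if h : ((Finset.Icc 1 d).filter fun k => 0 < gX X k).Nonempty
  then ((Finset.Icc 1 d).filter fun k => 0 < gX X k).min' h else d + 1

/-- `p_B(X) = sup{k ∈ {1,…,d} : g_X(k) < 0}`, convention `sup ∅ = 0`. -/
def pB {d : ℕ} (X : E d) : ℕ :=
  ((Finset.Icc 1 d).filter fun k => gX X k < 0).sup id

/-- `B_X⁻¹(z) = sup{i ∈ {1,…,d} : B_X(i) ≥ z}`, convention `sup ∅ = 0`. -/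
def Binv {d : ℕ} (X : E d) (z : ℕ) : ℕ :=
  ((Finset.Icc 1 d).filter fun i => z ≤ BX X i).sup id

/-- `S_X⁻¹(z) = inf{i ∈ {1,…,d} : S_X(i) ≥ z}`, convention `inf ∅ = d+1`. -/
def Sinv {d : ℕ} (X : E d) (z : ℕ) : ℕ :=
  if h : ((Finset.Icc 1 d).filter fun i => z ≤ SX X i).Nonempty
  then ((Finset.Icc 1 d).filter fun i => z ≤ SX X i).min' h else d + 1

/-- Buy side after order-matching clearing (Eq. (11) of the paper):
`C(X)⁺ = τ_{p_B}(X⁺)` if `g_X(p_B) ≤ −X⁺_{p_B}`, and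
`C(X)⁺ = τ_{p_B−1}(X⁺) − min{0, g_X(p_B)}·e_{p_B}` otherwise. -/
def clearPlus {d : ℕ} (X : E d) : Fin d → ℕ :=
  if gX X (pB X) ≤ -(ent X.1 (pB X) : ℤ) then tauLow (pB X : ℤ) X.1
  else fun j => tauLow ((pB X : ℤ) - 1) X.1 j + (max 0 (-(gX X (pB X)))).toNat * e (pB X) j

/-- Sell side after order-matching clearing (Eq. (12) of the paper):
`C(X)⁻ = τ^{p_A}(X⁻)` if `g_X(p_A) ≥ X⁻_{p_A}`, and
`C(X)⁻ = τ^{p_A+1}(X⁻) + max{0, g_X(p_A)}·e_{p_A}` otherwise. -/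
def clearMinus {d : ℕ} (X : E d) : Fin d → ℕ :=
  if (ent X.2 (pA X) : ℤ) ≤ gX X (pA X) then tauHigh (pA X : ℤ) X.2
  else fun j => tauHigh ((pA X : ℤ) + 1) X.2 j + (max 0 (gX X (pA X))).toNat * e (pA X) j

/-- The order-matching clearing operator. -/
def clear {d : ℕ} (X : E d) : E d := (clearPlus X, clearMinus X)

/-- Price support of an integer-valued vector. -/
def suppZ {d : ℕ} (W : Fin d → ℤ) : Finset ℕ :=
  (Finset.univ.filter fun j : Fin d => 0 < W j).image fun j : Fin d => (j : ℕ) + 1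

/-- `sup supp` of an integer-valued vector, convention `sup ∅ = 0`. -/
def supSuppZ {d : ℕ} (W : Fin d → ℤ) : ℕ := (suppZ W).sup id

/-- `inf supp` of an integer-valued vector, convention `inf ∅ = d+1`. -/
def infSuppZ {d : ℕ} (W : Fin d → ℤ) : ℕ :=
  if h : (suppZ W).Nonempty then (suppZ W).min' h else d + 1

/-- `D : E → E` is an order-matching clearing operator: it maps into `L`, its fixed
points are exactly `L`, and, with `Z(X) = X − D(X)` (computed in `ℤ^d × ℤ^d`), the
conditions (A1)–(A4) of Definition 2.2 hold. -/
def IsOrderMatchingClearing {d : ℕ} (D : E d → E d) : Prop :=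
  (∀ X : E d, D X ∈ Lset d) ∧
  (∀ X : E d, X ∈ Lset d ↔ D X = X) ∧
  (∀ X : E d,
    -- (A1): the executed orders `Z(X) = X − D(X)` have nonnegative entries
    (∀ j, (D X).1 j ≤ X.1 j ∧ (D X).2 j ≤ X.2 j) ∧
    -- (A2): `|Z(X)⁺| = |Z(X)⁻|`
    (∑ j, ((X.1 j : ℤ) - ((D X).1 j : ℤ))) = (∑ j, ((X.2 j : ℤ) - ((D X).2 j : ℤ))) ∧
    -- (A3): `sup supp(Z(X)⁻) ≤ inf supp(Z(X)⁺)`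
    supSuppZ (fun j => (X.2 j : ℤ) - ((D X).2 j : ℤ)) ≤
      infSuppZ (fun j => (X.1 j : ℤ) - ((D X).1 j : ℤ)) ∧
    -- (A4): `sup supp(Z(X)⁻) ≤ inf supp(D(X)⁻)` and `inf supp(Z(X)⁺) ≥ sup supp(D(X)⁺)`
    supSuppZ (fun j => (X.2 j : ℤ) - ((D X).2 j : ℤ)) ≤ infSupp (D X).2 ∧
    supSupp (D X).1 ≤ infSuppZ (fun j => (X.1 j : ℤ) - ((D X).1 j : ℤ)))


variable {d : ℕ}

lemma mem_supp_bounds {Z : Fin d → ℕ} {b : ℕ} (hb : b ∈ supp Z) : 1 ≤ b ∧ b ≤ d := by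
  unfold supp at hb
  simp only [Finset.mem_image, Finset.mem_filter, Finset.mem_univ, true_and] at hb
  obtain ⟨i, -, rfl⟩ := hb
  have := i.2; omega

lemma mem_supp_iff {Z : Fin d → ℕ} {j : Fin d} : ((j : ℕ) + 1) ∈ supp Z ↔ 0 < Z j := by
  unfold supp
  simp only [Finset.mem_image, Finset.mem_filter, Finset.mem_univ, true_and]
  constructor
  · rintro ⟨i, hi, h⟩
    have : i = j := Fin.ext (by omega)
    rwa [this] at hi
  · intro h; exact ⟨j, h, rfl⟩

lemma le_supSupp {Z : Fin d → ℕ} {j : Fin d} (h : 0 < Z j) : (j : ℕ) + 1 ≤ supSupp Z :=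
  Finset.le_sup (f := id) (mem_supp_iff.2 h)

lemma eq_zero_of_supSupp_lt {Z : Fin d → ℕ} {j : Fin d} (h : supSupp Z < (j : ℕ) + 1) :
    Z j = 0 := by
  by_contra hz
  exact absurd (le_supSupp (Nat.pos_of_ne_zero hz)) (by omega)

lemma infSupp_le {Z : Fin d → ℕ} {j : Fin d} (h : 0 < Z j) : infSupp Z ≤ (j : ℕ) + 1 := by
  have hm := mem_supp_iff.2 h
  rw [infSupp, dif_pos ⟨_, hm⟩]
  exact Finset.min'_le _ _ hm

lemma eq_zero_of_lt_infSupp {Z : Fin d → ℕ} {j : Fin d} (h : (j : ℕ) + 1 < infSupp Z) :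
    Z j = 0 := by
  by_contra hz
  exact absurd (infSupp_le (Nat.pos_of_ne_zero hz)) (by omega)

lemma supSupp_le_d {Z : Fin d → ℕ} : supSupp Z ≤ d := by
  apply Finset.sup_le
  intro b hb
  unfold supp at hb
  simp only [Finset.mem_image, Finset.mem_filter, Finset.mem_univ, true_and] at hb
  obtain ⟨i, -, rfl⟩ := hb
  simp only [id_eq]
  have := i.2; omega

lemma infSupp_le_d_succ {Z : Fin d → ℕ} : infSupp Z ≤ d + 1 := by
  unfold infSupp
  split
  · rename_i h
    obtain ⟨b, hb⟩ := h
    refine le_trans (Finset.min'_le _ _ hb) ?_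
    unfold supp at hb
    simp only [Finset.mem_image, Finset.mem_filter, Finset.mem_univ, true_and] at hb
    obtain ⟨i, -, rfl⟩ := hb
    have := i.2; omega
  · exact le_refl _

lemma one_le_infSupp {Z : Fin d → ℕ} : 1 ≤ infSupp Z := by
  unfold infSupp
  split
  · rename_i h
    exact (mem_supp_bounds (Finset.min'_mem (supp Z) h)).1
  · omega

lemma exists_supSupp {Z : Fin d → ℕ} (h : Z ≠ 0) :
    ∃ j : Fin d, 0 < Z j ∧ (j : ℕ) + 1 = supSupp Z := by
  have hne : (supp Z).Nonempty := by
    obtain ⟨j, hj⟩ := Function.ne_iff.1 h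
    exact ⟨_, mem_supp_iff.2 (Nat.pos_of_ne_zero hj)⟩
  obtain ⟨b, hb, hsup⟩ := Finset.exists_mem_eq_sup (supp Z) hne id
  unfold supp at hb
  simp only [Finset.mem_image, Finset.mem_filter, Finset.mem_univ, true_and] at hb
  obtain ⟨i, hi, rfl⟩ := hb
  exact ⟨i, hi, hsup.symm⟩

lemma exists_infSupp {Z : Fin d → ℕ} (h : Z ≠ 0) :
    ∃ j : Fin d, 0 < Z j ∧ (j : ℕ) + 1 = infSupp Z := by
  have hne : (supp Z).Nonempty := by
    obtain ⟨j, hj⟩ := Function.ne_iff.1 h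
    exact ⟨_, mem_supp_iff.2 (Nat.pos_of_ne_zero hj)⟩
  have hb := Finset.min'_mem (supp Z) hne
  rw [infSupp, dif_pos hne]
  generalize hm : (supp Z).min' hne = m at *
  unfold supp at hb
  simp only [Finset.mem_image, Finset.mem_filter, Finset.mem_univ, true_and] at hb
  obtain ⟨i, hi, hh⟩ := hb
  exact ⟨i, hi, hh⟩

lemma supSupp_eq {Z : Fin d → ℕ} {j : Fin d} (h : 0 < Z j)
    (hmax : ∀ i : Fin d, 0 < Z i → (i : ℕ) ≤ j) : supSupp Z = (j : ℕ) + 1 := by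
  refine le_antisymm ?_ (le_supSupp h)
  apply Finset.sup_le
  intro b hb
  unfold supp at hb
  simp only [Finset.mem_image, Finset.mem_filter, Finset.mem_univ, true_and] at hb
  obtain ⟨i, hi, rfl⟩ := hb
  simpa using Nat.add_le_add_right (hmax i hi) 1

lemma infSupp_eq {Z : Fin d → ℕ} {j : Fin d} (h : 0 < Z j)
    (hmin : ∀ i : Fin d, 0 < Z i → (j : ℕ) ≤ i) : infSupp Z = (j : ℕ) + 1 := by
  refine le_antisymm (infSupp_le h) ?_
  have hne : (supp Z).Nonempty := ⟨_, mem_supp_iff.2 h⟩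
  rw [infSupp, dif_pos hne]
  apply Finset.le_min'
  intro b hb
  unfold supp at hb
  simp only [Finset.mem_image, Finset.mem_filter, Finset.mem_univ, true_and] at hb
  obtain ⟨i, hi, rfl⟩ := hb
  simpa using Nat.add_le_add_right (hmin i hi) 1

lemma infSupp_zero : infSupp (0 : Fin d → ℕ) = d + 1 := by
  rw [infSupp, dif_neg]
  rintro ⟨b, hb⟩
  unfold supp at hb
  simp at hb

lemma SX_mono {X : E d} {m n : ℕ} (h : m ≤ n) : SX X m ≤ SX X n := by
  apply Finset.sum_le_sum
  intro j _
  split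
  · rw [if_pos (by omega)]
  · exact Nat.zero_le _

lemma BX_anti {X : E d} {m n : ℕ} (h : m ≤ n) : BX X n ≤ BX X m := by
  apply Finset.sum_le_sum
  intro j _
  split
  · rw [if_pos (by omega)]
  · exact Nat.zero_le _

lemma SX_zero {X : E d} : SX X 0 = 0 := by
  apply Finset.sum_eq_zero
  intro j _
  rw [if_neg (by omega)]

lemma SX_zero_of_lt_ask {X : E d} {m : ℕ} (h : m < ask X) : SX X m = 0 := by
  apply Finset.sum_eq_zero
  intro j _
  split
  · rename_i hj
    by_contra hz
    have := infSupp_le (Z := X.2) (Nat.pos_of_ne_zero hz)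
    unfold ask at h
    omega
  · rfl

lemma BX_zero_of_bid_lt {X : E d} {m : ℕ} (h : bid X < m) : BX X m = 0 := by
  apply Finset.sum_eq_zero
  intro j _
  split
  · rename_i hj
    by_contra hz
    have := le_supSupp (Z := X.1) (Nat.pos_of_ne_zero hz)
    unfold bid at h
    omega
  · rfl

lemma le_SX {X : E d} {j : Fin d} {m : ℕ} (h : (j : ℕ) + 1 ≤ m) : X.2 j ≤ SX X m := by
  calc X.2 j = if (j : ℕ) + 1 ≤ m then X.2 j else 0 := by rw [if_pos h]
  _ ≤ SX X m := Finset.single_le_sum (f := fun i : Fin d => if (i : ℕ) + 1 ≤ m then X.2 i else 0)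
      (fun i _ => by positivity) (Finset.mem_univ j)

lemma le_BX {X : E d} {j : Fin d} {m : ℕ} (h : m ≤ (j : ℕ) + 1) : X.1 j ≤ BX X m := by
  calc X.1 j = if m ≤ (j : ℕ) + 1 then X.1 j else 0 := by rw [if_pos h]
  _ ≤ BX X m := Finset.single_le_sum (f := fun i : Fin d => if m ≤ (i : ℕ) + 1 then X.1 i else 0)
      (fun i _ => by positivity) (Finset.mem_univ j)

lemma SX_pos {X : E d} {m : ℕ} (h2 : X.2 ≠ 0) (h : ask X ≤ m) : 0 < SX X m := by
  obtain ⟨j, hj, hja⟩ := exists_infSupp h2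
  have : X.2 j ≤ SX X m := le_SX (by unfold ask at h; omega)
  omega

lemma BX_pos {X : E d} {m : ℕ} (h1 : X.1 ≠ 0) (h : m ≤ bid X) : 0 < BX X m := by
  obtain ⟨j, hj, hjb⟩ := exists_supSupp h1
  have : X.1 j ≤ BX X m := le_BX (by unfold bid at h; omega)
  omega

lemma SX_succ {X : E d} {m : ℕ} (hm : m < d) :
    SX X (m + 1) = SX X m + X.2 ⟨m, hm⟩ := by
  unfold SX
  rw [show X.2 ⟨m, hm⟩ = ∑ j : Fin d, if j = ⟨m, hm⟩ then X.2 j else 0 by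
    rw [Finset.sum_ite_eq' Finset.univ]; simp, ← Finset.sum_add_distrib]
  apply Finset.sum_congr rfl
  intro j _
  by_cases hj : j = ⟨m, hm⟩
  · subst hj; simp
  · have hv : (j : ℕ) ≠ m := fun h => hj (Fin.ext h)
    rw [if_neg hj]
    by_cases h2 : (j : ℕ) + 1 ≤ m
    · rw [if_pos (by omega), if_pos h2]; simp
    · rw [if_neg (by omega), if_neg h2]

lemma Sinv_le_d_succ {X : E d} {z : ℕ} : Sinv X z ≤ d + 1 := by
  unfold Sinv
  split
  · rename_i h
    have := Finset.min'_mem _ h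
    simp only [Finset.mem_filter, Finset.mem_Icc] at this
    omega
  · exact le_refl _

lemma one_le_Sinv {X : E d} {z : ℕ} : 1 ≤ Sinv X z := by
  unfold Sinv
  split
  · rename_i h
    have := Finset.min'_mem _ h
    simp only [Finset.mem_filter, Finset.mem_Icc] at this
    omega
  · omega

lemma Sinv_le_iff {X : E d} {z m : ℕ} (hz : 1 ≤ z) (hm : m ≤ d) :
    Sinv X z ≤ m ↔ z ≤ SX X m := by
  constructor
  · intro h
    unfold Sinv at h
    split at h
    · rename_i hne
      have hmem := Finset.min'_mem _ hne
      simp only [Finset.mem_filter, Finset.mem_Icc] at hmem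
      exact le_trans hmem.2 (SX_mono h)
    · omega
  · intro h
    have hm1 : 1 ≤ m := by
      by_contra hc
      have : m = 0 := by omega
      rw [this, SX_zero] at h; omega
    have hmem : m ∈ (Finset.Icc 1 d).filter fun i => z ≤ SX X i := by
      simp only [Finset.mem_filter, Finset.mem_Icc]
      exact ⟨⟨hm1, hm⟩, h⟩
    rw [Sinv, dif_pos ⟨m, hmem⟩]
    exact Finset.min'_le _ _ hmem

lemma SX_lt_of_lt_Sinv {X : E d} {z m : ℕ} (hz : 1 ≤ z) (h : m < Sinv X z) :
    SX X m < z := by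
  rcases Nat.lt_or_ge m 1 with hm | hm
  · interval_cases m
    rw [SX_zero]; omega
  · have hmd : m ≤ d := by have := Sinv_le_d_succ (X := X) (z := z); omega
    by_contra hc
    have := (Sinv_le_iff (X := X) hz hmd).2 (by omega)
    omega

lemma z_le_SX_Sinv {X : E d} {z : ℕ} (hz : 1 ≤ z) (hzd : z ≤ SX X d) :
    z ≤ SX X (Sinv X z) := by
  have h1 : Sinv X z ≤ d := (Sinv_le_iff hz (le_refl d)).2 hzd
  exact (Sinv_le_iff hz h1).1 (le_refl _)

lemma Sinv_mono {X : E d} {z w : ℕ} (hz : 1 ≤ z) (h : z ≤ w) : Sinv X z ≤ Sinv X w := by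
  rcases Nat.lt_or_ge d (Sinv X w) with hc | hc
  · have := Sinv_le_d_succ (X := X) (z := z); omega
  · rw [Sinv_le_iff hz hc]
    exact le_trans h ((Sinv_le_iff (by omega) hc).1 (le_refl _))

lemma ask_le_Sinv {X : E d} {z : ℕ} (hz : 1 ≤ z) : ask X ≤ Sinv X z := by
  by_contra hc
  push_neg at hc
  have h1 : SX X (Sinv X z) = 0 := SX_zero_of_lt_ask hc
  have h2 : Sinv X z ≤ d := by
    have h3 := infSupp_le_d_succ (Z := X.2)
    unfold ask at hc; omega
  have := (Sinv_le_iff hz h2).1 (le_refl _)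
  omega

lemma pB_eq {Y : E d} {p : ℕ} (h1 : p ∈ Finset.Icc 1 d) (h2 : gX Y p < 0)
    (h3 : ∀ m ∈ Finset.Icc 1 d, gX Y m < 0 → m ≤ p) : pB Y = p := by
  apply le_antisymm
  · apply Finset.sup_le
    intro m hm
    simp only [Finset.mem_filter] at hm
    exact h3 m hm.1 hm.2
  · exact Finset.le_sup (f := id) (Finset.mem_filter.2 ⟨h1, h2⟩)

lemma pA_eq {Y : E d} {p : ℕ} (h1 : p ∈ Finset.Icc 1 d) (h2 : 0 < gX Y p)
    (h3 : ∀ m ∈ Finset.Icc 1 d, 0 < gX Y m → p ≤ m) : pA Y = p := by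
  have hmem : p ∈ (Finset.Icc 1 d).filter fun k => 0 < gX Y k :=
    Finset.mem_filter.2 ⟨h1, h2⟩
  rw [pA, dif_pos ⟨p, hmem⟩]
  apply le_antisymm
  · exact Finset.min'_le _ _ hmem
  · apply Finset.le_min'
    intro m hm
    simp only [Finset.mem_filter] at hm
    exact h3 m hm.1 hm.2

lemma ent_eq {X : Fin d → ℕ} {j : Fin d} : ent X ((j : ℕ) + 1) = X j := by
  rw [ent, dif_pos ⟨by omega, by have := j.2; omega⟩]
  exact congrArg X (Fin.ext (by simp))

lemma sum_e {k c : ℕ} (hk1 : 1 ≤ k) (hk2 : k ≤ d) {m : ℕ} :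
    (∑ j : Fin d, if m ≤ (j : ℕ) + 1 then c * e k j else 0) = if m ≤ k then c else 0 := by
  rw [Finset.sum_eq_single (⟨k - 1, by omega⟩ : Fin d)]
  · simp only [e]
    rcases le_or_gt m k with h | h
    · rw [if_pos (show m ≤ k - 1 + 1 by omega), if_pos (show k - 1 + 1 = k by omega),
        if_pos h]
      simp
    · rw [if_neg (show ¬ m ≤ k - 1 + 1 by omega), if_neg (by omega)]
  · intro j _ hj
    have : (j : ℕ) + 1 ≠ k := by
      intro hh
      exact hj (Fin.ext (show (j : ℕ) = k - 1 by omega))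
    simp only [e, if_neg this, mul_zero, ite_self]
  · intro h
    exact absurd (Finset.mem_univ _) h

lemma sum_e' {k c : ℕ} (hk1 : 1 ≤ k) (hk2 : k ≤ d) {m : ℕ} :
    (∑ j : Fin d, if (j : ℕ) + 1 ≤ m then c * e k j else 0) = if k ≤ m then c else 0 := by
  rw [Finset.sum_eq_single (⟨k - 1, by omega⟩ : Fin d)]
  · simp only [e]
    rcases le_or_gt k m with h | h
    · rw [if_pos (show k - 1 + 1 ≤ m by omega), if_pos (show k - 1 + 1 = k by omega),
        if_pos h]
      simp
    · rw [if_neg (show ¬ k - 1 + 1 ≤ m by omega), if_neg (by omega)]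
  · intro j _ hj
    have : (j : ℕ) + 1 ≠ k := by
      intro hh
      exact hj (Fin.ext (show (j : ℕ) = k - 1 by omega))
    simp only [e, if_neg this, mul_zero, ite_self]
  · intro h
    exact absurd (Finset.mem_univ _) h

lemma BX_zero_of_d_lt {X : E d} {m : ℕ} (h : d < m) : BX X m = 0 := by
  apply Finset.sum_eq_zero
  intro j _
  rw [if_neg (by have := j.2; omega)]

lemma ent_zero {X : Fin d → ℕ} {m : ℕ} (h : ¬ (1 ≤ m ∧ m ≤ d)) : ent X m = 0 := by
  rw [ent, dif_neg h]

lemma ent_le_SX {X : E d} {m : ℕ} : ent X.2 m ≤ SX X m := by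
  by_cases h : 1 ≤ m ∧ m ≤ d
  · rw [ent, dif_pos h]
    exact le_SX (by simp; omega)
  · rw [ent, dif_neg h]; exact Nat.zero_le _

lemma ent_le_BX {X : E d} {m : ℕ} : ent X.1 m ≤ BX X m := by
  by_cases h : 1 ≤ m ∧ m ≤ d
  · rw [ent, dif_pos h]
    exact le_BX (by simp; omega)
  · rw [ent, dif_neg h]; exact Nat.zero_le _

lemma clear_of_mem_Lset {Y : E d} (hY : Y ∈ Lset d) : clear Y = Y := by
  have hplus : clearPlus Y = Y.1 := by
    by_cases h1 : Y.1 = 0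
    · have hBzero : ∀ m, BX Y m = 0 := by
        intro m
        apply Finset.sum_eq_zero
        intro j _
        rw [h1]
        simp
      have hfe : ((Finset.Icc 1 d).filter fun m => gX Y m < 0) = ∅ := by
        apply Finset.filter_false_of_mem
        intro m _
        rw [gX, hBzero]
        simp
      have hpB : pB Y = 0 := by rw [pB, hfe]; rfl
      rw [clearPlus, if_pos]
      · funext j
        rw [tauLow, if_neg (by omega), h1]
        rfl
      · rw [hpB, gX, hBzero, SX_zero]
        have : ent Y.1 0 = 0 := ent_zero (by omega)
        rw [this]
        simp
    · have hb1 : 1 ≤ bid Y := by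
        obtain ⟨j, hj, hjb⟩ := exists_supSupp h1
        unfold bid
        omega
      have hbd : bid Y ≤ d := supSupp_le_d
      have haY : bid Y < ask Y := hY
      have hpB : pB Y = bid Y := by
        apply pB_eq (Finset.mem_Icc.2 ⟨hb1, hbd⟩)
        · rw [gX, SX_zero_of_lt_ask haY]
          have := BX_pos h1 (le_refl (bid Y))
          omega
        · intro m _ hm
          by_contra hc
          rw [gX, BX_zero_of_bid_lt (by omega)] at hm
          omega
      rw [clearPlus, if_pos]
      · funext j
        rw [tauLow]
        split
        · rfl
        · rename_i hsplit
          rw [hpB] at hsplit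
          unfold bid at hsplit
          exact (eq_zero_of_supSupp_lt (by exact_mod_cast not_le.mp hsplit)).symm
      · rw [hpB, gX, SX_zero_of_lt_ask haY]
        have := ent_le_BX (X := Y) (m := bid Y)
        omega
  have hminus : clearMinus Y = Y.2 := by
    by_cases h2 : Y.2 = 0
    · have hSzero : ∀ m, SX Y m = 0 := by
        intro m
        apply Finset.sum_eq_zero
        intro j _
        rw [h2]
        simp
      have hfe : ((Finset.Icc 1 d).filter fun m => 0 < gX Y m) = ∅ := by
        apply Finset.filter_false_of_mem
        intro m _
        rw [gX, hSzero]
        simp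
      have hpA : pA Y = d + 1 := by
        rw [pA, dif_neg]
        rw [hfe]
        simp
      rw [clearMinus, if_pos]
      · funext j
        rw [tauHigh, if_neg (by push_cast; have := j.2; omega), h2]
        rfl
      · rw [hpA, gX, hSzero, BX_zero_of_d_lt (by omega)]
        have : ent Y.2 (d + 1) = 0 := ent_zero (by omega)
        rw [this]
        simp
    · have ha1 : 1 ≤ ask Y := one_le_infSupp
      have had : ask Y ≤ d := by
        obtain ⟨j, hj, hja⟩ := exists_infSupp h2
        have := j.2
        unfold ask
        omega
      have haY : bid Y < ask Y := hY
      have hpA : pA Y = ask Y := by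
        apply pA_eq (Finset.mem_Icc.2 ⟨ha1, had⟩)
        · rw [gX, BX_zero_of_bid_lt haY]
          have := SX_pos h2 (le_refl (ask Y))
          omega
        · intro m _ hm
          by_contra hc
          rw [gX, SX_zero_of_lt_ask (by omega)] at hm
          omega
      rw [clearMinus, if_pos]
      · funext j
        rw [tauHigh]
        split
        · rfl
        · rename_i hsplit
          rw [hpA] at hsplit
          unfold ask at hsplit
          exact (eq_zero_of_lt_infSupp (by exact_mod_cast not_le.mp hsplit)).symm
      · rw [hpA, gX, BX_zero_of_bid_lt haY]
        have := ent_le_SX (X := Y) (m := ask Y)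
        omega
  rw [clear, hplus, hminus]

lemma BX_add {X : E d} {k z : ℕ} (hk1 : 1 ≤ k) (hk2 : k ≤ d) (m : ℕ) :
    BX (X.1 + z • e k, X.2) m = BX X m + (if m ≤ k then z else 0) := by
  unfold BX
  rw [← sum_e (d := d) hk1 hk2 (m := m), ← Finset.sum_add_distrib]
  apply Finset.sum_congr rfl
  intro j _
  simp only [Pi.add_apply, Pi.smul_apply, smul_eq_mul]
  split <;> simp

lemma ent_add_ne {W : Fin d → ℕ} {k z m : ℕ} (hm : m ≠ k) :
    ent (W + z • e k) m = ent W m := by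
  unfold ent
  split
  · rename_i h
    simp only [Pi.add_apply, Pi.smul_apply, smul_eq_mul, e]
    rw [if_neg (show ¬ (m - 1 + 1 = k) by omega)]
    simp
  · rfl

lemma ent_add_eq {W : Fin d → ℕ} {k z : ℕ} (hk1 : 1 ≤ k) (hk2 : k ≤ d) :
    ent (W + z • e k) k = ent W k + z := by
  unfold ent
  rw [dif_pos ⟨hk1, hk2⟩, dif_pos ⟨hk1, hk2⟩]
  simp only [Pi.add_apply, Pi.smul_apply, smul_eq_mul, e]
  rw [if_pos (show k - 1 + 1 = k by omega)]
  simp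

lemma SX_pred {X : E d} {m : ℕ} (hm1 : 1 ≤ m) (hm2 : m ≤ d) :
    SX X m = SX X (m - 1) + ent X.2 m := by
  have h := SX_succ (X := X) (m := m - 1) (by omega)
  rw [ent, dif_pos ⟨hm1, hm2⟩]
  rw [show m - 1 + 1 = m by omega] at h
  exact h

lemma entry_zero_of_SX {X : E d} {j : Fin d} (h : SX X ((j : ℕ) + 1) ≤ SX X (j : ℕ)) :
    X.2 j = 0 := by
  have hs := SX_succ (X := X) (m := (j : ℕ)) j.2
  rw [Fin.eta] at hs
  omega

lemma supSupp_add_e {W : Fin d → ℕ} {k c : ℕ} (hk1 : 1 ≤ k) (hk2 : k ≤ d) (hc : 0 < c)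
    (hw : supSupp W < k) : supSupp (W + c • e k) = k := by
  rw [show k = ((⟨k - 1, by omega⟩ : Fin d) : ℕ) + 1 by simp; omega]
  apply supSupp_eq
  · simp only [Pi.add_apply, Pi.smul_apply, smul_eq_mul, e, if_true]
    omega
  · intro i hi
    simp only [Pi.add_apply, Pi.smul_apply, smul_eq_mul, e] at hi
    rcases Nat.eq_zero_or_pos (W i) with h0 | h0
    · rw [h0] at hi
      split at hi
      · rename_i hik
        simp only []
        omega
      · omega
    · have hib := le_supSupp h0
      simp only []
      omega

lemma ent_fst_zero {X : E d} {m : ℕ} (h : bid X < m) : ent X.1 m = 0 := by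
  by_cases hm : 1 ≤ m ∧ m ≤ d
  · rw [ent, dif_pos hm]
    apply eq_zero_of_supSupp_lt
    show supSupp X.1 < ((⟨m - 1, by omega⟩ : Fin d) : ℕ) + 1
    unfold bid at h
    simp only []
    omega
  · rw [ent, dif_neg hm]

lemma ent_snd {X : E d} {m : ℕ} (hm1 : 1 ≤ m) (hm2 : m ≤ d) :
    ent X.2 m = X.2 ⟨m - 1, by omega⟩ := by
  rw [ent, dif_pos ⟨hm1, hm2⟩]

/-- Proposition 2.5, Case 1: limit buy order of size `z` at price `k`. -/
theorem clear_limit_buy_order (d : ℕ) (hd : 1 ≤ d) (X : E d) (hX : X ∈ Lset d)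
    (hplus : X.1 ≠ 0) (hminus : X.2 ≠ 0) (k z : ℕ) (hk : k ∈ Finset.Icc 1 d)
    (hz1 : 1 ≤ z) (hz : z < min (BX X 1) (SX X d))
    (X' : E d) (hX' : X' = clear (X.1 + z • e k, X.2)) :
    X' ∈ Lset d ∧
    -- (a) `k ≤ b(X)`
    (k ≤ bid X →
      X' = (X.1 + z • e k, X.2) ∧ bid X' = bid X ∧ ask X' = ask X) ∧
    -- (b) `b(X) < k < a(X)`
    (bid X < k → k < ask X →
      X' = (X.1 + z • e k, X.2) ∧ bid X' = k ∧ ask X' = ask X) ∧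
    -- (c) `a(X) ≤ k < S_X⁻¹(z)`
    (ask X ≤ k → k < Sinv X z →
      X' = (X.1 + (z - SX X k) • e k, tauHigh ((k : ℤ) + 1) X.2) ∧
      bid X' = k ∧ ask X' = Sinv X (SX X k + 1)) ∧
    -- (d) `S_X⁻¹(z) ≤ k`
    (Sinv X z ≤ k →
      X' = (X.1, tauHigh ((Sinv X z : ℤ) + 1) X.2 + (SX X (Sinv X z) - z) • e (Sinv X z)) ∧
      bid X' = bid X ∧ ask X' = Sinv X (z + 1)) := by
  rw [Finset.mem_Icc] at hk
  obtain ⟨hk1, hk2⟩ := hk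
  set Y : E d := (X.1 + z • e k, X.2) with hY
  have hSXY : ∀ m, SX Y m = SX X m := fun m => rfl
  have hBXY : ∀ m, BX Y m = BX X m + (if m ≤ k then z else 0) := BX_add hk1 hk2
  have haskY : ask Y = ask X := rfl
  have hzB : z < BX X 1 := lt_of_lt_of_le hz (min_le_left _ _)
  have hzS : z < SX X d := lt_of_lt_of_le hz (min_le_right _ _)
  have hb1 : 1 ≤ bid X := by
    obtain ⟨j, hj, hjb⟩ := exists_supSupp hplus
    unfold bid
    omega
  have hbd : bid X ≤ d := supSupp_le_d
  have ha1 : 1 ≤ ask X := one_le_infSupp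
  have had : ask X ≤ d := by
    obtain ⟨j, hj, hja⟩ := exists_infSupp hminus
    have := j.2
    unfold ask
    omega
  have hba : bid X < ask X := hX
  -- Case (a)
  have caseA : k ≤ bid X →
      X' = (X.1 + z • e k, X.2) ∧ bid X' = bid X ∧ ask X' = ask X := by
    intro hka
    have hbidY : bid Y = bid X := by
      obtain ⟨j0, hj0, hj0b⟩ := exists_supSupp hplus
      unfold bid
      rw [show supSupp X.1 = (j0 : ℕ) + 1 from hj0b.symm]
      apply supSupp_eq
      · simp only [hY, Pi.add_apply, Pi.smul_apply, smul_eq_mul]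
        omega
      · intro i hi
        simp only [hY, Pi.add_apply, Pi.smul_apply, smul_eq_mul, e] at hi
        rcases Nat.eq_zero_or_pos (X.1 i) with h0 | h0
        · rw [h0] at hi
          split at hi
          · rename_i hik
            have hkb : k ≤ bid X := hka
            unfold bid at hkb
            omega
          · omega
        · have := le_supSupp h0
          omega
    have hYL : Y ∈ Lset d := by
      show bid Y < ask Y
      rw [hbidY, haskY]
      exact hba
    have hXY : X' = Y := by rw [hX', clear_of_mem_Lset hYL]
    refine ⟨hXY, ?_, ?_⟩
    · rw [hXY]; exact hbidY
    · rw [hXY]; exact haskY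
  -- Case (b)
  have caseB : bid X < k → k < ask X →
      X' = (X.1 + z • e k, X.2) ∧ bid X' = k ∧ ask X' = ask X := by
    intro hbk hka
    have hbidY : bid Y = k := by
      unfold bid
      rw [show k = ((⟨k - 1, by omega⟩ : Fin d) : ℕ) + 1 by simp; omega]
      apply supSupp_eq
      · simp only [hY, Pi.add_apply, Pi.smul_apply, smul_eq_mul, e]
        rw [if_pos (show ((⟨k - 1, by omega⟩ : Fin d) : ℕ) + 1 = k by simp; omega)]
        omega
      · intro i hi
        simp only [hY, Pi.add_apply, Pi.smul_apply, smul_eq_mul, e] at hi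
        rcases Nat.eq_zero_or_pos (X.1 i) with h0 | h0
        · rw [h0] at hi
          split at hi
          · rename_i hik
            simp only []
            omega
          · omega
        · have hib := le_supSupp h0
          unfold bid at hbk
          simp only []
          omega
    have hYL : Y ∈ Lset d := by
      show bid Y < ask Y
      rw [hbidY, haskY]
      exact hka
    have hXY : X' = Y := by rw [hX', clear_of_mem_Lset hYL]
    refine ⟨hXY, ?_, ?_⟩
    · rw [hXY]; exact hbidY
    · rw [hXY]; exact haskY
  -- Case (c)
  have caseC : ask X ≤ k → k < Sinv X z →
      X' = (X.1 + (z - SX X k) • e k, tauHigh ((k : ℤ) + 1) X.2) ∧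
      bid X' = k ∧ ask X' = Sinv X (SX X k + 1) := by
    intro hak hks
    have hSk : SX X k < z := SX_lt_of_lt_Sinv hz1 hks
    have hSinvd : Sinv X z ≤ d := (Sinv_le_iff hz1 le_rfl).2 (le_of_lt hzS)
    have hkd' : k + 1 ≤ d := by omega
    have hbk : bid X < k := lt_of_lt_of_le hba hak
    have hSkpos : 0 < SX X k := SX_pos hminus hak
    have hSk1pos : 0 < SX X (k + 1) := SX_pos hminus (by omega)
    have hpB : pB Y = k := by
      apply pB_eq (Finset.mem_Icc.2 ⟨hk1, hk2⟩)
      · rw [gX, hSXY, hBXY, if_pos le_rfl, BX_zero_of_bid_lt hbk]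
        push_cast
        omega
      · intro m hm hgm
        rw [Finset.mem_Icc] at hm
        by_contra hc
        rw [gX, hSXY, hBXY, if_neg (by omega), BX_zero_of_bid_lt (by omega)] at hgm
        push_cast at hgm
        omega
    have hpA : pA Y = k + 1 := by
      apply pA_eq (Finset.mem_Icc.2 ⟨by omega, hkd'⟩)
      · rw [gX, hSXY, hBXY, if_neg (by omega), BX_zero_of_bid_lt (by omega)]
        push_cast
        omega
      · intro m hm hgm
        rw [Finset.mem_Icc] at hm
        by_contra hc
        have hmk : m ≤ k := by omega
        have hSm : SX X m ≤ SX X k := SX_mono hmk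
        rw [gX, hSXY, hBXY, if_pos hmk] at hgm
        push_cast at hgm
        omega
    have hgk : gX Y k = (SX X k : ℤ) - z := by
      rw [gX, hSXY, hBXY, if_pos le_rfl, BX_zero_of_bid_lt hbk]
      push_cast
      ring
    have hgk1 : gX Y (k + 1) = (SX X (k + 1) : ℤ) := by
      rw [gX, hSXY, hBXY, if_neg (by omega), BX_zero_of_bid_lt (by omega)]
      push_cast
      ring
    have hentk : ent Y.1 k = ent X.1 k + z := ent_add_eq hk1 hk2
    have hentX1k : ent X.1 k = 0 := ent_fst_zero hbk
    have hCplus : clearPlus Y = X.1 + (z - SX X k) • e k := by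
      rw [clearPlus, if_neg (by rw [hpB, hgk, hentk, hentX1k]; push_cast; omega)]
      have htn : (max 0 (-(gX Y k))).toNat = z - SX X k := by
        rw [hgk]
        omega
      funext j
      rw [hpB, htn]
      show tauLow ((k : ℤ) - 1) (X.1 + z • e k) j + (z - SX X k) * e k j
          = ((X.1 + (z - SX X k) • e k : Fin d → ℕ)) j
      simp only [tauLow, Pi.add_apply, Pi.smul_apply, smul_eq_mul, e]
      unfold bid at hbk
      split_ifs with h1 h2 h2
      · exfalso; omega
      · simp
      · rw [eq_zero_of_supSupp_lt (show supSupp X.1 < (j : ℕ) + 1 by omega)]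
      · rw [eq_zero_of_supSupp_lt (show supSupp X.1 < (j : ℕ) + 1 by omega)]
    have hCminus : clearMinus Y = tauHigh ((k : ℤ) + 1) X.2 := by
      rw [clearMinus, if_pos]
      · rw [hpA]
        show tauHigh _ X.2 = _
        norm_num
      · rw [hpA, hgk1]
        have := ent_le_SX (X := X) (m := k + 1)
        have hYX2 : ent Y.2 (k + 1) = ent X.2 (k + 1) := rfl
        rw [hYX2]
        omega
    have hX'val : X' = (X.1 + (z - SX X k) • e k, tauHigh ((k : ℤ) + 1) X.2) := by
      rw [hX', clear]
      exact Prod.ext hCplus hCminus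
    refine ⟨hX'val, ?_, ?_⟩
    · rw [hX'val]
      show supSupp (X.1 + (z - SX X k) • e k) = k
      exact supSupp_add_e hk1 hk2 (by omega) hbk
    · rw [hX'val]
      show infSupp (tauHigh ((k : ℤ) + 1) X.2) = Sinv X (SX X k + 1)
      set r := Sinv X (SX X k + 1) with hr
      have hrd : r ≤ d := (Sinv_le_iff (by omega) le_rfl).2 (by omega)
      have hSr : SX X k + 1 ≤ SX X r := z_le_SX_Sinv (by omega) (by omega)
      have hrk : k + 1 ≤ r := by
        by_contra hc
        have := (Sinv_le_iff (X := X) (z := SX X k + 1) (by omega) hk2).1 (by omega)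
        omega
      have hSr1 : SX X (r - 1) ≤ SX X k := by
        have := SX_lt_of_lt_Sinv (X := X) (z := SX X k + 1) (by omega) (show r - 1 < r by omega)
        omega
      have hr1 : 1 ≤ r := one_le_Sinv
      rw [show r = ((⟨r - 1, by omega⟩ : Fin d) : ℕ) + 1 by simp; omega]
      apply infSupp_eq
      · simp only [tauHigh]
        rw [if_pos (show (k : ℤ) + 1 ≤ (((r - 1 : ℕ) : ℤ) + 1) by push_cast; omega)]
        have hpred := SX_pred (X := X) (m := r) hr1 hrd
        rw [ent_snd hr1 hrd] at hpred
        show 0 < X.2 ⟨r - 1, _⟩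
        rw [show (⟨r - 1, by omega⟩ : Fin d) = ⟨r - 1, by omega⟩ from rfl] at hpred
        omega
      · intro i hi
        simp only [tauHigh] at hi
        split at hi
        · rename_i hik
          have hik' : k + 1 ≤ (i : ℕ) + 1 := by exact_mod_cast hik
          have hSXi : SX X k + 1 ≤ SX X ((i : ℕ) + 1) := by
            have h1 : SX X k ≤ SX X (i : ℕ) := SX_mono (by omega)
            have h2 := SX_succ (X := X) (m := (i : ℕ)) i.2
            rw [Fin.eta] at h2
            omega
          have := (Sinv_le_iff (X := X) (z := SX X k + 1) (by omega) (show (i : ℕ) + 1 ≤ d from i.2)).2 hSXi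
          show r - 1 ≤ (i : ℕ)
          omega
        · omega
  -- Case (d)
  have caseD : Sinv X z ≤ k →
      X' = (X.1, tauHigh ((Sinv X z : ℤ) + 1) X.2 + (SX X (Sinv X z) - z) • e (Sinv X z)) ∧
      bid X' = bid X ∧ ask X' = Sinv X (z + 1) := by
    intro hsk
    set s := Sinv X z with hs
    have hsd : s ≤ d := (Sinv_le_iff hz1 le_rfl).2 (le_of_lt hzS)
    have hs1 : 1 ≤ s := one_le_Sinv
    have has : ask X ≤ s := ask_le_Sinv hz1
    have hbs : bid X < s := lt_of_lt_of_le hba has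
    have hs2 : 2 ≤ s := by omega
    have hSs : z ≤ SX X s := z_le_SX_Sinv hz1 (le_of_lt hzS)
    have hSs1 : SX X (s - 1) < z := SX_lt_of_lt_Sinv hz1 (by omega)
    set t := Sinv X (z + 1) with ht
    have htd : t ≤ d := (Sinv_le_iff (by omega) le_rfl).2 (by omega)
    have hst : s ≤ t := Sinv_mono hz1 (by omega)
    have hSt : z + 1 ≤ SX X t := z_le_SX_Sinv (by omega) (by omega)
    have hSt1 : SX X (t - 1) < z + 1 := SX_lt_of_lt_Sinv (by omega) (by omega)
    have hbt : bid X < t := by omega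
    have hpB : pB Y = s - 1 := by
      apply pB_eq (Finset.mem_Icc.2 ⟨by omega, by omega⟩)
      · rw [gX, hSXY, hBXY, if_pos (by omega)]
        push_cast
        omega
      · intro m hm hgm
        rw [Finset.mem_Icc] at hm
        by_contra hc
        have hms : s ≤ m := by omega
        have hBm : BX X m = 0 := BX_zero_of_bid_lt (by omega)
        have hSm : z ≤ SX X m := le_trans hSs (SX_mono hms)
        rw [gX, hSXY, hBXY, hBm] at hgm
        by_cases hmk : m ≤ k
        · rw [if_pos hmk] at hgm; push_cast at hgm; omega
        · rw [if_neg hmk] at hgm; push_cast at hgm; omega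
    have hentY : ent Y.1 (s - 1) = ent X.1 (s - 1) := ent_add_ne (by omega)
    have hentB : ent X.1 (s - 1) ≤ BX X (s - 1) := ent_le_BX
    have hCplus : clearPlus Y = X.1 := by
      rw [clearPlus, if_pos]
      · funext j
        rw [hpB, tauLow]
        split
        · rename_i hsp
          show ((X.1 + z • e k : Fin d → ℕ)) j = X.1 j
          simp only [Pi.add_apply, Pi.smul_apply, smul_eq_mul, e]
          rw [if_neg (show ¬ ((j : ℕ) + 1 = k) by omega)]
          simp
        · rename_i hsp
          exact (eq_zero_of_supSupp_lt
            (show supSupp X.1 < (j : ℕ) + 1 by unfold bid at hbs; omega)).symm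
      · rw [hpB, gX, hSXY, hBXY, if_pos (by omega), hentY]
        push_cast
        omega
    have hpA : pA Y = min t (k + 1) := by
      apply pA_eq (Finset.mem_Icc.2 ⟨by omega, by omega⟩)
      · rcases le_or_gt t k with h | h
        · rw [min_eq_left (by omega), gX, hSXY, hBXY, if_pos h, BX_zero_of_bid_lt hbt]
          push_cast
          omega
        · rw [min_eq_right (by omega), gX, hSXY, hBXY, if_neg (by omega),
            BX_zero_of_bid_lt (by omega)]
          have : z ≤ SX X (k + 1) := le_trans hSs (SX_mono (by omega))
          push_cast
          omega
      · intro m hm hgm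
        rw [Finset.mem_Icc] at hm
        by_contra hc
        push_neg at hc
        have hmk : m ≤ k := by omega
        have hSm : SX X m < z + 1 := SX_lt_of_lt_Sinv (by omega) (by omega)
        rw [gX, hSXY, hBXY, if_pos hmk] at hgm
        push_cast at hgm
        omega
    have key : ∀ u : ℕ, s < u → SX X (u - 1) ≤ z →
        tauHigh (u : ℤ) X.2 = tauHigh ((s : ℤ) + 1) X.2 + (SX X s - z) • e s := by
      intro u hsu hSu
      have hSsz : SX X s = z := le_antisymm (le_trans (SX_mono (by omega)) hSu) hSs
      funext j
      simp only [tauHigh, Pi.add_apply, Pi.smul_apply, smul_eq_mul, e]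
      by_cases h3 : (j : ℕ) + 1 = s
      · rw [if_neg (show ¬ ((u : ℤ) ≤ (j : ℕ) + 1) by omega),
          if_neg (show ¬ ((s : ℤ) + 1 ≤ (j : ℕ) + 1) by omega), if_pos h3]
        omega
      · by_cases h2 : s + 1 ≤ (j : ℕ) + 1
        · by_cases h1 : u ≤ (j : ℕ) + 1
          · rw [if_pos (show (u : ℤ) ≤ (j : ℕ) + 1 by omega),
              if_pos (show (s : ℤ) + 1 ≤ (j : ℕ) + 1 by omega), if_neg h3]
            simp
          · rw [if_neg (show ¬ ((u : ℤ) ≤ (j : ℕ) + 1) by omega),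
              if_pos (show (s : ℤ) + 1 ≤ (j : ℕ) + 1 by omega), if_neg h3]
            have h0 : X.2 j = 0 := entry_zero_of_SX (by
              have l1 : SX X ((j : ℕ) + 1) ≤ SX X (u - 1) := SX_mono (by omega)
              have l2 : SX X s ≤ SX X (j : ℕ) := SX_mono (by omega)
              omega)
            rw [h0]
            simp
        · rw [if_neg (show ¬ ((u : ℤ) ≤ (j : ℕ) + 1) by omega),
            if_neg (show ¬ ((s : ℤ) + 1 ≤ (j : ℕ) + 1) by omega), if_neg h3]
          simp
    have hCminus : clearMinus Y = tauHigh ((s : ℤ) + 1) X.2 + (SX X s - z) • e s := by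
      rcases le_or_gt t k with htk | htk
      · have hpA' : pA Y = t := by rw [hpA, min_eq_left (by omega)]
        have hgt : gX Y t = (SX X t : ℤ) - z := by
          rw [gX, hSXY, hBXY, if_pos htk, BX_zero_of_bid_lt hbt]
          push_cast
          ring
        have hpred := SX_pred (X := X) (m := t) (by omega) htd
        have hentt : ent Y.2 t = ent X.2 t := rfl
        rcases Nat.lt_or_ge (SX X (t - 1)) z with hlt | hge
        · have hts : s = t := by
            have hc2 : ¬ s ≤ t - 1 := by
              intro hc
              have := (Sinv_le_iff (X := X) hz1 (show t - 1 ≤ d by omega)).1 hc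
              omega
            omega
          have hcond : ¬ ((ent Y.2 t : ℤ) ≤ gX Y t) := by
            rw [hentt, hgt]
            omega
          rw [clearMinus, hpA', if_neg hcond]
          have htoNat : (max 0 (gX Y t)).toNat = SX X t - z := by rw [hgt]; omega
          funext j
          rw [htoNat, ← hts]
          show tauHigh ((s : ℤ) + 1) X.2 j + (SX X s - z) * e s j
            = ((tauHigh ((s : ℤ) + 1) X.2 + (SX X s - z) • e s : Fin d → ℕ)) j
          simp only [Pi.add_apply, Pi.smul_apply, smul_eq_mul]
        · have hcond : (ent Y.2 t : ℤ) ≤ gX Y t := by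
            rw [hentt, hgt]
            omega
          rw [clearMinus, hpA', if_pos hcond]
          apply key t ?_ (by omega)
          have := (Sinv_le_iff (X := X) hz1 (show t - 1 ≤ d by omega)).2 hge
          omega
      · have hpA' : pA Y = k + 1 := by rw [hpA, min_eq_right (by omega)]
        have hg : gX Y (k + 1) = (SX X (k + 1) : ℤ) := by
          rw [gX, hSXY, hBXY, if_neg (by omega), BX_zero_of_bid_lt (by omega)]
          push_cast
          ring
        have hcond : (ent Y.2 (k + 1) : ℤ) ≤ gX Y (k + 1) := by
          rw [hg]
          exact_mod_cast ent_le_SX (X := X)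
        rw [clearMinus, hpA', if_pos hcond]
        apply key (k + 1) (by omega) (by
          have h4 : SX X k < z + 1 := SX_lt_of_lt_Sinv (by omega) htk
          simpa using (by omega : SX X k ≤ z))
    have hX'val : X' = (X.1, tauHigh ((s : ℤ) + 1) X.2 + (SX X s - z) • e s) := by
      rw [hX', clear]
      exact Prod.ext hCplus hCminus
    refine ⟨hX'val, ?_, ?_⟩
    · rw [hX'val]
      rfl
    · rw [hX'val]
      show infSupp (tauHigh ((s : ℤ) + 1) X.2 + (SX X s - z) • e s) = t
      rcases Nat.lt_or_ge z (SX X s) with hgt | hge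
      · have hts : t = s := by
          have h4 : t ≤ s := (Sinv_le_iff (X := X) (z := z + 1) (by omega) hsd).2 (by omega)
          omega
        have hval : 0 < ((tauHigh ((s : ℤ) + 1) X.2 + (SX X s - z) • e s : Fin d → ℕ))
            (⟨s - 1, by omega⟩ : Fin d) := by
          simp only [Pi.add_apply, Pi.smul_apply, smul_eq_mul, tauHigh, e]
          rw [if_neg (show ¬ ((s : ℤ) + 1 ≤ ((s - 1 : ℕ) : ℤ) + 1) by push_cast; omega),
            if_pos (show s - 1 + 1 = s by omega)]
          omega
        have hmin : ∀ i : Fin d,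
            0 < ((tauHigh ((s : ℤ) + 1) X.2 + (SX X s - z) • e s : Fin d → ℕ)) i →
            s - 1 ≤ (i : ℕ) := by
          intro i hi
          simp only [Pi.add_apply, Pi.smul_apply, smul_eq_mul, tauHigh, e] at hi
          by_cases h2 : (s : ℤ) + 1 ≤ (i : ℕ) + 1
          · omega
          · rw [if_neg h2] at hi
            by_cases h3 : (i : ℕ) + 1 = s
            · omega
            · rw [if_neg h3] at hi
              simp at hi
        exact (infSupp_eq hval hmin).trans (by show s - 1 + 1 = t; omega)
      · have hSsz : SX X s = z := le_antisymm hge hSs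
        have hts : s + 1 ≤ t := by
          rcases Nat.eq_or_lt_of_le hst with h | h
          · exfalso
            rw [← h] at hSt
            omega
          · omega
        have hval : 0 < ((tauHigh ((s : ℤ) + 1) X.2 + (SX X s - z) • e s : Fin d → ℕ))
            (⟨t - 1, by omega⟩ : Fin d) := by
          simp only [Pi.add_apply, Pi.smul_apply, smul_eq_mul, tauHigh, e]
          rw [if_pos (show (s : ℤ) + 1 ≤ ((t - 1 : ℕ) : ℤ) + 1 by push_cast; omega),
            if_neg (show ¬ (t - 1 + 1 = s) by omega)]
          have hpred := SX_pred (X := X) (m := t) (by omega) htd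
          rw [ent_snd (by omega) htd] at hpred
          show 0 < X.2 ⟨t - 1, _⟩ + (SX X s - z) * 0
          rw [show (⟨t - 1, by omega⟩ : Fin d) = ⟨t - 1, by omega⟩ from rfl] at hpred
          omega
        have hmin : ∀ i : Fin d,
            0 < ((tauHigh ((s : ℤ) + 1) X.2 + (SX X s - z) • e s : Fin d → ℕ)) i →
            t - 1 ≤ (i : ℕ) := by
          intro i hi
          simp only [Pi.add_apply, Pi.smul_apply, smul_eq_mul, tauHigh, e] at hi
          have hc0 : SX X s - z = 0 := by omega
          rw [hc0] at hi
          by_cases h2 : (s : ℤ) + 1 ≤ (i : ℕ) + 1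
          · rw [if_pos h2] at hi
            have hX2i : 0 < X.2 i := by omega
            have hSXi : z + 1 ≤ SX X ((i : ℕ) + 1) := by
              have l1 : SX X s ≤ SX X (i : ℕ) := SX_mono (by omega)
              have l2 := SX_succ (X := X) (m := (i : ℕ)) i.2
              rw [Fin.eta] at l2
              omega
            have := (Sinv_le_iff (X := X) (z := z + 1) (by omega)
              (show (i : ℕ) + 1 ≤ d from i.2)).2 hSXi
            omega
          · rw [if_neg h2] at hi
            simp at hi
        exact (infSupp_eq hval hmin).trans (by show t - 1 + 1 = t; omega)
  refine ⟨?_, caseA, caseB, caseC, caseD⟩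
  rcases le_or_gt k (bid X) with h1 | h1
  · obtain ⟨-, hb', ha'⟩ := caseA h1
    show bid X' < ask X'
    rw [hb', ha']
    exact hba
  · rcases lt_or_ge k (ask X) with h2 | h2
    · obtain ⟨-, hb', ha'⟩ := caseB h1 h2
      show bid X' < ask X'
      rw [hb', ha']
      exact h2
    · rcases lt_or_ge k (Sinv X z) with h3 | h3
      · obtain ⟨-, hb', ha'⟩ := caseC h2 h3
        show bid X' < ask X'
        rw [hb', ha']
        by_contra hc
        push_neg at hc
        have := (Sinv_le_iff (X := X) (z := SX X k + 1) (by omega) hk2).1 hc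
        omega
      · obtain ⟨-, hb', ha'⟩ := caseD h3
        show bid X' < ask X'
        rw [hb', ha']
        have h5 : ask X ≤ Sinv X (z + 1) := ask_le_Sinv (by omega)
        omega


end OB
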